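/- In the Suzy-and-Billy equational state S₀, the closest-state semantics validates both the might-conditional ((¬st ∧ sd ∧ bd) ◇→ ¬bs) and the would-conditional ((¬bt ∧ sd ∧ bd) □→ bs), i.e. at S₀ the might-conditional ((¬st ∧ sd ∧ bd) ◇→ ¬bs) holds while ((¬bt ∧ sd ∧ bd) □→ bs) holds. -/
import Mathlib


/-- Propositional formulas over atoms of type `α`. -/
inductive PForm (α : Type) : Type
  | atom (a : α) : PForm α
  | top : PForm α
  | neg (φ : PForm α) : PForm α
  | conj (φ ψ : PForm α) : PForm α
  | biimp (φ ψ : PForm α) : PForm α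

/-- Truth of a propositional formula in a valuation `V`. -/
def PForm.eval {α : Type} (V : Set α) : PForm α → Prop
  | .atom a => a ∈ V
  | .top => True
  | .neg φ => ¬ φ.eval V
  | .conj φ ψ => φ.eval V ∧ ψ.eval V
  | .biimp φ ψ => (φ.eval V ↔ ψ.eval V)

/-- A state: a causal base together with a compatible valuation. -/
structure State (α : Type) where
  base : Set (PForm α)
  val : Set α
  compat : ∀ ω ∈ base, ω.eval val

/-- `simLE S S'' S'` means `S'' ⪯_S S'` : `S'` is at least as similar to `S` as `S''` is. -/
def simLE {α : Type} (S S'' S' : State α) : Prop :=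
  (S.base ∩ S''.base) ⊆ (S.base ∩ S'.base) ∧
    (symmDiff S.val S'.val) ⊆ (symmDiff S.val S''.val)

/-- `simLT S S' S''` means `S' ≺_S S''`. -/
def simLT {α : Type} (S S' S'' : State α) : Prop :=
  simLE S S' S'' ∧ ¬ simLE S S'' S'

/-- The set of `P`-closest states to `S` relative to context `U`. -/
def Closest {α : Type} (P : Set (State α)) (S : State α) (U : Set (State α)) :
    Set (State α) :=
  {S' ∈ U | S' ∈ P ∧ ¬ ∃ S'' ∈ U, S'' ∈ P ∧ simLT S S' S''}

/- Atoms: sd = 0, bd = 1, st = 2, bt = 3, sh = 4, bh = 5, bs = 6. -/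

/-- The causal base of the Suzy-and-Billy example. -/
def suzyBase : Set (PForm ℕ) :=
  { PForm.biimp (.atom 2) (.atom 0),
    PForm.biimp (.atom 3) (.atom 1),
    PForm.biimp (.atom 4) (.atom 2),
    PForm.biimp (.atom 5) (.conj (.atom 3) (.neg (.atom 4))),
    PForm.biimp (.atom 6) (.neg (.conj (.neg (.atom 4)) (.neg (.atom 5)))) }

/-- The actual valuation: sd, bd, st, bt, sh, bs. -/
def suzyVal : Set ℕ := {0, 1, 2, 3, 4, 6}

/-- The actual state of the Suzy-and-Billy example. -/
def suzyState : State ℕ :=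
  ⟨suzyBase, suzyVal, by
    intro ω hω
    simp only [suzyBase, Set.mem_insert_iff, Set.mem_singleton_iff] at hω
    rcases hω with h | h | h | h | h <;> subst h <;>
      simp [PForm.eval, suzyVal]⟩


/-- Witness state for part 1: Suzy doesn't throw, Billy's rock is caught. -/
def S1 : State ℕ :=
  ⟨{ PForm.biimp (.atom 3) (.atom 1),
     PForm.biimp (.atom 4) (.atom 2),
     PForm.biimp (.atom 6) (.neg (.conj (.neg (.atom 4)) (.neg (.atom 5)))) },
   {0, 1, 3}, by
    intro ω hω
    simp only [Set.mem_insert_iff, Set.mem_singleton_iff] at hω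
    rcases hω with h | h | h <;> subst h <;> simp [PForm.eval]⟩

/-- Witness state for part 2: Billy doesn't throw, Suzy hits. -/
def S2 : State ℕ :=
  ⟨{ PForm.biimp (.atom 2) (.atom 0),
     PForm.biimp (.atom 4) (.atom 2),
     PForm.biimp (.atom 5) (.conj (.atom 3) (.neg (.atom 4))),
     PForm.biimp (.atom 6) (.neg (.conj (.neg (.atom 4)) (.neg (.atom 5)))) },
   {0, 1, 2, 4, 6}, by
    intro ω hω
    simp only [Set.mem_insert_iff, Set.mem_singleton_iff] at hω
    rcases hω with h | h | h | h <;> subst h <;> simp [PForm.eval]⟩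

theorem suzy_actual_cause_billy_not :
    (∃ S' ∈ Closest
        {T : State ℕ | 2 ∉ T.val ∧ 0 ∈ T.val ∧ 1 ∈ T.val}
        suzyState (Set.univ : Set (State ℕ)),
      6 ∉ S'.val) ∧
    (∀ S' ∈ Closest
        {T : State ℕ | 3 ∉ T.val ∧ 0 ∈ T.val ∧ 1 ∈ T.val}
        suzyState (Set.univ : Set (State ℕ)),
      6 ∈ S'.val) := by
  constructor
  · -- Part 1: S1 is a closest (¬st ∧ sd ∧ bd)-state with ¬bs
    refine ⟨S1, ⟨Set.mem_univ _, ⟨by simp [S1], by simp [S1], by simp [S1]⟩, ?_⟩,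
      by simp [S1]⟩
    rintro ⟨S'', -, ⟨h2, h0, h1⟩, hle, hnle⟩
    apply hnle
    obtain ⟨hbase, hdiff⟩ := hle
    -- facts about S''.val from the symmetric-difference bound
    have h3 : 3 ∈ S''.val := by
      by_contra h
      have : (3 : ℕ) ∈ symmDiff suzyState.val S''.val :=
        Or.inl ⟨by simp [suzyState, suzyVal], h⟩
      have := hdiff this
      simp [Set.mem_symmDiff, suzyState, suzyVal, S1] at this
    have h5 : 5 ∉ S''.val := by
      intro h
      have : (5 : ℕ) ∈ symmDiff suzyState.val S''.val :=
        Or.inr ⟨h, by simp [suzyState, suzyVal]⟩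
      have := hdiff this
      simp [Set.mem_symmDiff, suzyState, suzyVal, S1] at this
    -- the three kept equations hold in S''
    have hsh : (PForm.biimp (.atom 4) (.atom 2) : PForm ℕ) ∈ S''.base := by
      have : (PForm.biimp (.atom 4) (.atom 2) : PForm ℕ) ∈ suzyState.base ∩ S1.base := by
        constructor <;> simp [suzyState, suzyBase, S1]
      exact (hbase this).2
    have hbs : (PForm.biimp (.atom 6)
        (.neg (.conj (.neg (.atom 4)) (.neg (.atom 5)))) : PForm ℕ) ∈ S''.base := by
      have : (PForm.biimp (.atom 6)
          (.neg (.conj (.neg (.atom 4)) (.neg (.atom 5)))) : PForm ℕ)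
          ∈ suzyState.base ∩ S1.base := by
        constructor <;> simp [suzyState, suzyBase, S1]
      exact (hbase this).2
    have h4 : 4 ∉ S''.val := by
      have := S''.compat _ hsh
      simp only [PForm.eval] at this
      exact fun h => h2 (this.mp h)
    have h6 : 6 ∉ S''.val := by
      have := S''.compat _ hbs
      simp only [PForm.eval] at this
      intro h
      exact (this.mp h) ⟨h4, h5⟩
    constructor
    · -- base inclusion: suzyBase ∩ S''.base ⊆ suzyBase ∩ S1.base
      rintro ω ⟨hωs, hωb⟩
      have hev := S''.compat ω hωb
      refine ⟨hωs, ?_⟩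
      simp only [suzyState, suzyBase, Set.mem_insert_iff, Set.mem_singleton_iff] at hωs
      rcases hωs with h | h | h | h | h <;> subst h <;>
        simp only [PForm.eval] at hev
      · exact absurd (hev.mpr h0) h2
      · simp [S1]
      · simp [S1]
      · exact absurd (hev.mpr ⟨h3, h4⟩) h5
      · simp [S1]
    · -- symmDiff inclusion
      intro x hx
      have hx' : x = 2 ∨ x = 4 ∨ x = 6 := by
        simp [Set.mem_symmDiff, suzyState, suzyVal, S1] at hx
        omega
      rcases hx' with rfl | rfl | rfl
      · exact Or.inl ⟨by simp [suzyState, suzyVal], h2⟩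
      · exact Or.inl ⟨by simp [suzyState, suzyVal], h4⟩
      · exact Or.inl ⟨by simp [suzyState, suzyVal], h6⟩
  · -- Part 2: every closest (¬bt ∧ sd ∧ bd)-state satisfies bs
    rintro S' ⟨-, ⟨h3, h0, h1⟩, hnd⟩
    by_contra h6
    apply hnd
    refine ⟨S2, Set.mem_univ _, ⟨by simp [S2], by simp [S2], by simp [S2]⟩, ⟨?_, ?_⟩, ?_⟩
    · -- suzyBase ∩ S'.base ⊆ suzyBase ∩ S2.base
      rintro ω ⟨hωs, hωb⟩
      have hev := S'.compat ω hωb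
      refine ⟨hωs, ?_⟩
      simp only [suzyState, suzyBase, Set.mem_insert_iff, Set.mem_singleton_iff] at hωs
      rcases hωs with h | h | h | h | h <;> subst h <;>
        simp only [PForm.eval] at hev
      · simp [S2]
      · exact absurd (hev.mpr h1) h3
      · simp [S2]
      · simp [S2]
      · simp [S2]
    · -- symmDiff suzyVal S2.val ⊆ symmDiff suzyVal S'.val
      intro x hx
      have hx' : x = 3 := by
        simp [Set.mem_symmDiff, suzyState, suzyVal, S2] at hx
        omega
      subst hx'
      exact Or.inl ⟨by simp [suzyState, suzyVal], h3⟩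
    · -- strictness
      rintro ⟨-, hd⟩
      have : (6 : ℕ) ∈ symmDiff suzyState.val S2.val :=
        hd (Or.inl ⟨by simp [suzyState, suzyVal], h6⟩)
      simp [Set.mem_symmDiff, suzyState, suzyVal, S2] at this
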